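/- arXiv:1612.08198 — 2 statements merged into one kernel-verified Lean document; each statement's English description precedes it below -/
import Mathlib

section
/- Let d ≥ 1, let a be a jump kernel and b a rate-perturbation kernel, let ω ≥ 0, and let ϑ'' < ϑ be real numbers. Then for every correlation-type function k with ‖k‖_{ϑ''} < ∞: ‖C^{Δ,ω} k‖_ϑ ≤ ((ω + ⟨b⟩ e^{ϑ}) / (e(ϑ − ϑ''))) ‖k‖_{ϑ''} and ‖D^Δ k‖_ϑ ≤ (⟨b⟩ e^{ϑ} / (e(ϑ − ϑ''))) ‖k‖_{ϑ''}; hence C^{Δ,ω} and D^Δ define bounded linear operators from K_{ϑ''} to K_ϑ with these operator-norm bounds. (Estimates (4.12) of the paper.) -/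
open MeasureTheory ENNReal Real Filter Finset

namespace Kawasaki

abbrev Rd (d : ℕ) := Fin d → ℝ

structure JumpKernel (d : ℕ) where
  a : Rd d → Rd d → ℝ
  measurable : Measurable fun p : Rd d × Rd d => a p.1 p.2
  nonneg : ∀ x y, 0 ≤ a x y
  symm : ∀ x y, a x y = a y x
  integrable : ∀ y, Integrable fun x => a x y
  sup_integral : (⨆ y : Rd d, ∫ x, a x y) = 1

structure RateKernel (d : ℕ) where
  b : Rd d → Rd d → Rd d → ℝ
  measurable : Measurable fun p : Rd d × Rd d × Rd d => b p.1 p.2.1 p.2.2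
  nonneg : ∀ x y z, 0 ≤ b x y z
  integrable : ∀ x y, Integrable fun z => b x y z
  int_bddAbove : BddAbove (Set.range fun p : Rd d × Rd d => ∫ z, b p.1 p.2 z)
  bddAbove : BddAbove (Set.range fun p : Rd d × Rd d × Rd d => b p.1 p.2.1 p.2.2)

/-- ⟨b⟩ -/
noncomputable def RateKernel.avg {d : ℕ} (B : RateKernel d) : ℝ :=
  ⨆ p : Rd d × Rd d, ∫ z, B.b p.1 p.2 z

/-- b̄ -/
noncomputable def RateKernel.bbar {d : ℕ} (B : RateKernel d) : ℝ :=
  ⨆ p : Rd d × Rd d × Rd d, B.b p.1 p.2.1 p.2.2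

abbrev Fam (d : ℕ) := ∀ n : ℕ, (Fin n → Rd d) → ℝ

structure CorrFun (d : ℕ) where
  k : Fam d
  measurable : ∀ n, Measurable (k n)
  symm : ∀ (n : ℕ) (σ : Equiv.Perm (Fin n)) (x : Fin n → Rd d), k n (x ∘ σ) = k n x

noncomputable def esssupAbs (d n : ℕ) (f : (Fin n → Rd d) → ℝ) : ℝ≥0∞ :=
  essSup (fun x => ENNReal.ofReal |f x|) volume

noncomputable def famNorm (d : ℕ) (f : Fam d) (ϑ : ℝ) : ℝ≥0∞ :=
  ⨆ n : ℕ, ENNReal.ofReal (Real.exp (-ϑ * n)) * esssupAbs d n (f n)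

noncomputable def phiPlus (d : ℕ) (A : JumpKernel d) (B : RateKernel d) (x y : Rd d) : ℝ :=
  ∫ z, A.a z x * B.b z x y

noncomputable def phiMinus (d : ℕ) (A : JumpKernel d) (B : RateKernel d) (x y : Rd d) : ℝ :=
  ∫ z, A.a x z * B.b x z y

noncomputable def PhiPlus (d : ℕ) (A : JumpKernel d) (B : RateKernel d) (n : ℕ)
    (x : Fin n → Rd d) : ℝ :=
  ∑ i : Fin n, ∑ j ∈ Finset.univ.erase i, phiPlus d A B (x i) (x j)

noncomputable def PhiMinus (d : ℕ) (A : JumpKernel d) (B : RateKernel d) (n : ℕ)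
    (x : Fin n → Rd d) : ℝ :=
  ∑ i : Fin n, ∑ j ∈ Finset.univ.erase i, phiMinus d A B (x i) (x j)

noncomputable def Psi (d : ℕ) (A : JumpKernel d) (B : RateKernel d) (n : ℕ)
    (x : Fin n → Rd d) : ℝ :=
  (∑ i : Fin n, ∫ y, A.a (x i) y) + PhiMinus d A B n x

noncomputable def ADelta (d : ℕ) (A : JumpKernel d) (B : RateKernel d) (k : Fam d) : Fam d :=
  fun n x => ∑ i : Fin n, ∫ x',
    A.a x' (x i) * (1 + ∑ j ∈ Finset.univ.erase i, B.b x' (x i) (x j)) *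
      k n (Function.update x i x')

noncomputable def BDelta (d : ℕ) (A : JumpKernel d) (B : RateKernel d) (k : Fam d) : Fam d :=
  fun n x => -(Psi d A B n x) * k n x

noncomputable def BDeltaOmega (d : ℕ) (A : JumpKernel d) (B : RateKernel d) (ω : ℝ)
    (k : Fam d) : Fam d :=
  fun n x => -(Psi d A B n x + ω * n) * k n x

noncomputable def CDelta (d : ℕ) (A : JumpKernel d) (B : RateKernel d) (k : Fam d) : Fam d :=
  fun n x => ∑ i : Fin n, ∫ x', ∫ z,
    A.a x' (x i) * B.b x' (x i) z * k (n + 1) (Fin.snoc (Function.update x i x') z)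

noncomputable def CDeltaOmega (d : ℕ) (A : JumpKernel d) (B : RateKernel d) (ω : ℝ)
    (k : Fam d) : Fam d :=
  fun n x => CDelta d A B k n x + ω * n * k n x

noncomputable def DDelta (d : ℕ) (A : JumpKernel d) (B : RateKernel d) (k : Fam d) : Fam d :=
  fun n x => -∫ z, (∑ i : Fin n, ∫ y, A.a (x i) y * B.b (x i) y z) * k (n + 1) (Fin.snoc x z)

noncomputable def LDelta (d : ℕ) (A : JumpKernel d) (B : RateKernel d) (k : Fam d) : Fam d :=
  fun n x => ADelta d A B k n x + BDelta d A B k n x + CDelta d A B k n x + DDelta d A B k n x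


/-!
Each of the `n` summands of `C^Δ k` and `D^Δ k` on `n` particles averages `k⁽ⁿ⁺¹⁾` against a
kernel of total mass at most `⟨b⟩` (the jump kernel has mass at most one), so both are bounded
a.e. by `n ⟨b⟩ e^{ϑ''(n+1)} ‖k‖_{ϑ''}`; the term `ω n k⁽ⁿ⁾` is bounded by `ω n e^{ϑ'' n} ‖k‖_{ϑ''}`.
The factor `n` is absorbed by the change of weight, since `n e^{-(ϑ - ϑ'') n} ≤ 1 / (e (ϑ - ϑ''))`.
-/

section AeTuple

variable {α : Type*} [MeasureSpace α] [SigmaFinite (volume : Measure α)] {n : ℕ}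

theorem ae_ae_insertNth (i : Fin (n + 1)) {P : (Fin (n + 1) → α) → Prop}
    (h : ∀ᵐ y, P y) : ∀ᵐ x : Fin n → α, ∀ᵐ z : α, P (Fin.insertNth i z x) := by
  have hins := ((volume_preserving_piFinSuccAbove (fun _ => α) i).symm _).comp
    (Measure.measurePreserving_swap (μ := (volume : Measure (Fin n → α))) (ν := volume))
  simpa [Fin.insertNthEquiv] using Measure.ae_ae_of_ae_prod (hins.quasiMeasurePreserving.ae h)

theorem ae_ae_update (i : Fin n) {P : (Fin n → α) → Prop} (h : ∀ᵐ y, P y) :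
    ∀ᵐ x : Fin n → α, ∀ᵐ z : α, P (Function.update x i z) := by
  obtain ⟨m, rfl⟩ := Nat.exists_eq_succ_of_ne_zero i.pos.ne'
  have hremove : Measure.QuasiMeasurePreserving (Fin.removeNth i : (Fin (m + 1) → α) → _)
      volume volume :=
    Measure.quasiMeasurePreserving_snd.comp
      (volume_preserving_piFinSuccAbove (fun _ => α) i).quasiMeasurePreserving
  simpa using hremove.ae (ae_ae_insertNth i h)

end AeTuple

theorem abs_integral_mul_le_of_ae_abs_le {α : Type*} [MeasurableSpace α] {μ : Measure α}
    {w g : α → ℝ} {W C : ℝ} (hw : ∀ a, 0 ≤ w a) (hwi : Integrable w μ)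
    (hW : ∫ a, w a ∂μ ≤ W) (hC : 0 ≤ C) (hg : ∀ᵐ a ∂μ, |g a| ≤ C) :
    |∫ a, w a * g a ∂μ| ≤ W * C :=
  calc |∫ a, w a * g a ∂μ| ≤ ∫ a, w a * C ∂μ := by
        rw [← Real.norm_eq_abs]
        refine norm_integral_le_of_norm_le (hwi.mul_const C) (hg.mono fun a ha => ?_)
        rw [Real.norm_eq_abs, abs_mul, abs_of_nonneg (hw a)]
        exact mul_le_mul_of_nonneg_left ha (hw a)
    _ = (∫ a, w a ∂μ) * C := integral_mul_const C w
    _ ≤ W * C := mul_le_mul_of_nonneg_right hW hC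

variable {d : ℕ}

namespace JumpKernel

variable (A : JumpKernel d)

theorem integral_le_one (y : Rd d) : ∫ x, A.a x y ≤ 1 := by
  have hbdd : BddAbove (Set.range fun y => ∫ x, A.a x y) := by
    by_contra h
    simpa [Real.iSup_of_not_bddAbove h] using A.sup_integral
  exact A.sup_integral ▸ le_ciSup hbdd y

theorem integrable_right (x : Rd d) : Integrable fun y => A.a x y := by
  simpa only [A.symm x] using A.integrable x

theorem integral_right_le_one (x : Rd d) : ∫ y, A.a x y ≤ 1 := by
  simpa only [A.symm x] using A.integral_le_one x

end JumpKernel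

namespace RateKernel

variable (B : RateKernel d)

theorem integral_le_avg (x y : Rd d) : ∫ z, B.b x y z ≤ B.avg :=
  le_ciSup B.int_bddAbove (x, y)

theorem avg_nonneg : 0 ≤ B.avg :=
  (integral_nonneg fun z => B.nonneg 0 0 z).trans (B.integral_le_avg 0 0)

end RateKernel

section Operators

variable (A : JumpKernel d) (B : RateKernel d)

theorem abs_integral_jump_rate_mul_le (y : Rd d) {g : Rd d → Rd d → ℝ} {C : ℝ} (hC : 0 ≤ C)
    (hg : ∀ᵐ x, ∀ᵐ z, |g x z| ≤ C) :
    |∫ x, ∫ z, A.a x y * B.b x y z * g x z| ≤ B.avg * C := by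
  simp_rw [mul_assoc, integral_const_mul]
  simpa only [one_mul] using abs_integral_mul_le_of_ae_abs_le (fun x => A.nonneg x y)
    (A.integrable y) (A.integral_le_one y) (mul_nonneg B.avg_nonneg hC) <|
      hg.mono fun x hx => abs_integral_mul_le_of_ae_abs_le (B.nonneg x y) (B.integrable x y)
        (B.integral_le_avg x y) hC hx

theorem phiMinus_nonneg (x z : Rd d) : 0 ≤ phiMinus d A B x z :=
  integral_nonneg fun y => mul_nonneg (A.nonneg x y) (B.nonneg x y z)

theorem integrable_jump_mul_rate (x : Rd d) :
    Integrable (fun p : Rd d × Rd d => A.a x p.1 * B.b x p.1 p.2) (volume.prod volume) := by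
  have hmeas : Measurable fun p : Rd d × Rd d => A.a x p.1 * B.b x p.1 p.2 :=
    (A.measurable.comp (measurable_const.prodMk measurable_fst)).mul
      (B.measurable.comp (measurable_const.prodMk measurable_id))
  refine (integrable_prod_iff hmeas.aestronglyMeasurable).2
    ⟨.of_forall fun y => (B.integrable x y).const_mul (A.a x y), ?_⟩
  refine ((A.integrable_right x).mul_const B.avg).mono'
    hmeas.norm.stronglyMeasurable.integral_prod_right'.aestronglyMeasurable (.of_forall fun y => ?_)
  have hnorm : ∀ z, ‖A.a x y * B.b x y z‖ = A.a x y * B.b x y z := fun z =>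
    Real.norm_of_nonneg (mul_nonneg (A.nonneg x y) (B.nonneg x y z))
  simp_rw [hnorm, integral_const_mul]
  rw [Real.norm_of_nonneg (mul_nonneg (A.nonneg x y) (integral_nonneg (B.nonneg x y)))]
  exact mul_le_mul_of_nonneg_left (B.integral_le_avg x y) (A.nonneg x y)

theorem integrable_phiMinus (x : Rd d) : Integrable (phiMinus d A B x) :=
  (integrable_jump_mul_rate A B x).integral_prod_right

theorem integral_phiMinus_le (x : Rd d) : ∫ z, phiMinus d A B x z ≤ B.avg := by
  have hswap := integral_integral_swap (f := fun y z => A.a x y * B.b x y z)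
    (integrable_jump_mul_rate A B x)
  unfold phiMinus
  rw [← hswap]
  simp_rw [integral_const_mul]
  simpa only [one_mul] using (le_abs_self _).trans <| abs_integral_mul_le_of_ae_abs_le
    (A.nonneg x) (A.integrable_right x) (A.integral_right_le_one x) B.avg_nonneg
    (.of_forall fun y => (abs_of_nonneg (integral_nonneg (B.nonneg x y))).trans_le
      (B.integral_le_avg x y))

variable {k : Fam d} {n : ℕ} {C : ℝ}

theorem ae_abs_CDelta_le (hC : 0 ≤ C) (hk : ∀ᵐ y, |k (n + 1) y| ≤ C) :
    ∀ᵐ x, |CDelta d A B k n x| ≤ n * B.avg * C := by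
  have hsnoc := ae_ae_insertNth (Fin.last n) hk
  simp only [Fin.insertNth_last'] at hsnoc
  filter_upwards [ae_all_iff.2 fun i => ae_ae_update i hsnoc] with x hx
  calc |CDelta d A B k n x|
      ≤ ∑ i : Fin n, |∫ v, ∫ z, A.a v (x i) * B.b v (x i) z *
          k (n + 1) (Fin.snoc (Function.update x i v) z)| := Finset.abs_sum_le_sum_abs _ _
    _ ≤ ∑ _i : Fin n, B.avg * C :=
        Finset.sum_le_sum fun i _ => abs_integral_jump_rate_mul_le A B (x i) hC (hx i)
    _ = n * B.avg * C := by simp [mul_assoc]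

theorem ae_abs_DDelta_le (hC : 0 ≤ C) (hk : ∀ᵐ y, |k (n + 1) y| ≤ C) :
    ∀ᵐ x, |DDelta d A B k n x| ≤ n * B.avg * C := by
  have hsnoc := ae_ae_insertNth (Fin.last n) hk
  simp only [Fin.insertNth_last'] at hsnoc
  filter_upwards [hsnoc] with x hx
  have hmass : ∫ z, ∑ i : Fin n, phiMinus d A B (x i) z ≤ n * B.avg := by
    rw [integral_finsetSum _ fun i _ => integrable_phiMinus A B (x i)]
    simpa using Finset.sum_le_sum fun i (_ : i ∈ Finset.univ) => integral_phiMinus_le A B (x i)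
  rw [DDelta, abs_neg]
  -- the weight `∑ i, ∫ y, a (x i) y * b (x i) y z` of `D^Δ` is `∑ i, phiMinus (x i) z`
  exact abs_integral_mul_le_of_ae_abs_le (fun z => Finset.sum_nonneg fun i _ =>
    phiMinus_nonneg A B (x i) z) (integrable_finsetSum _ fun i _ => integrable_phiMinus A B (x i))
    hmass hC hx

end Operators

section Norms

variable {f : Fam d}

theorem ae_abs_le_exp_mul_famNorm {ϑ : ℝ} (hf : famNorm d f ϑ ≠ ⊤) (n : ℕ) :
    ∀ᵐ x, |f n x| ≤ exp (ϑ * n) * (famNorm d f ϑ).toReal := by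
  have hess : esssupAbs d n (f n) ≤ ENNReal.ofReal (exp (ϑ * n)) * famNorm d f ϑ :=
    calc esssupAbs d n (f n)
        = ENNReal.ofReal (exp (ϑ * n)) *
            (ENNReal.ofReal (exp (-ϑ * n)) * esssupAbs d n (f n)) := by
          rw [← mul_assoc, ← ENNReal.ofReal_mul (exp_pos _).le, ← exp_add, neg_mul,
            add_neg_cancel, exp_zero, ENNReal.ofReal_one, one_mul]
      _ ≤ _ := mul_le_mul_right (le_iSup (fun m : ℕ =>
          ENNReal.ofReal (exp (-ϑ * m)) * esssupAbs d m (f m)) n) _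
  filter_upwards [ENNReal.ae_le_essSup fun x => ENNReal.ofReal |f n x|] with x hx
  rw [← ENNReal.ofReal_le_ofReal_iff (by positivity), ENNReal.ofReal_mul (exp_pos _).le,
    ENNReal.ofReal_toReal hf]
  exact hx.trans hess

theorem famNorm_le_ofReal {ϑ c : ℝ} (h : ∀ n, ∀ᵐ x, |f n x| ≤ exp (ϑ * n) * c) :
    famNorm d f ϑ ≤ ENNReal.ofReal c := by
  refine iSup_le fun n => ?_
  have hess : esssupAbs d n (f n) ≤ ENNReal.ofReal (exp (ϑ * n) * c) :=
    essSup_le_of_ae_le _ ((h n).mono fun x hx => ENNReal.ofReal_le_ofReal hx)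
  calc ENNReal.ofReal (exp (-ϑ * n)) * esssupAbs d n (f n)
      ≤ ENNReal.ofReal (exp (-ϑ * n)) * ENNReal.ofReal (exp (ϑ * n) * c) :=
        mul_le_mul_right hess _
    _ = ENNReal.ofReal c := by
        rw [← ENNReal.ofReal_mul (exp_pos _).le, ← mul_assoc, ← exp_add, neg_mul,
          neg_add_cancel, exp_zero, one_mul]

theorem mul_exp_le_exp_div {ϑ'' ϑ : ℝ} (hϑ : ϑ'' < ϑ) (t : ℝ) :
    t * exp (ϑ'' * t) ≤ exp (ϑ * t) / (exp 1 * (ϑ - ϑ'')) := by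
  have hδ : 0 < ϑ - ϑ'' := sub_pos.2 hϑ
  rw [le_div_iff₀ (by positivity)]
  calc t * exp (ϑ'' * t) * (exp 1 * (ϑ - ϑ''))
      = (ϑ - ϑ'') * t * (exp 1 * exp (ϑ'' * t)) := by ring
    _ ≤ exp ((ϑ - ϑ'') * t - 1) * (exp 1 * exp (ϑ'' * t)) := by
        gcongr
        linarith [add_one_le_exp ((ϑ - ϑ'') * t - 1)]
    _ = exp (ϑ * t) := by rw [← exp_add, ← exp_add]; ring_nf

theorem famNorm_le_of_ae_abs_le_nat_mul_exp {ϑ'' ϑ c : ℝ} (hϑ : ϑ'' < ϑ) (hc : 0 ≤ c)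
    (h : ∀ n : ℕ, ∀ᵐ x, |f n x| ≤ n * exp (ϑ'' * n) * c) :
    famNorm d f ϑ ≤ ENNReal.ofReal (c / (exp 1 * (ϑ - ϑ''))) :=
  famNorm_le_ofReal fun n => (h n).mono fun x hx => hx.trans <|
    calc n * exp (ϑ'' * n) * c ≤ exp (ϑ * n) / (exp 1 * (ϑ - ϑ'')) * c :=
          mul_le_mul_of_nonneg_right (mul_exp_le_exp_div hϑ n) hc
      _ = exp (ϑ * n) * (c / (exp 1 * (ϑ - ϑ''))) := by ring

end Norms

theorem exp_mul_natCast_succ (ϑ : ℝ) (n : ℕ) : exp (ϑ * (n + 1 : ℕ)) = exp (ϑ * n) * exp ϑ := by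
  push_cast
  rw [mul_add, mul_one, exp_add]

section WeightedBounds

variable (A : JumpKernel d) (B : RateKernel d) {ϑ'' K : ℝ} {k : Fam d}

theorem ae_abs_CDeltaOmega_le {ω : ℝ} (hω : 0 ≤ ω) (hK : 0 ≤ K)
    (hk : ∀ m : ℕ, ∀ᵐ y, |k m y| ≤ exp (ϑ'' * m) * K) (n : ℕ) :
    ∀ᵐ x, |CDeltaOmega d A B ω k n x| ≤ n * exp (ϑ'' * n) * ((ω + B.avg * exp ϑ'') * K) := by
  filter_upwards [ae_abs_CDelta_le A B (by positivity) (hk (n + 1)), hk n] with x hC hkn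
  calc |CDeltaOmega d A B ω k n x| ≤ |CDelta d A B k n x| + |ω * n| * |k n x| :=
        (abs_add_le _ _).trans_eq (by rw [abs_mul])
    _ ≤ n * B.avg * (exp (ϑ'' * (n + 1 : ℕ)) * K) + ω * n * (exp (ϑ'' * n) * K) := by
        rw [abs_of_nonneg (by positivity : (0 : ℝ) ≤ ω * n)]
        gcongr
    _ = n * exp (ϑ'' * n) * ((ω + B.avg * exp ϑ'') * K) := by
        rw [exp_mul_natCast_succ]
        ring

theorem ae_abs_DDelta_le_nat_mul_exp (hK : 0 ≤ K)
    (hk : ∀ m : ℕ, ∀ᵐ y, |k m y| ≤ exp (ϑ'' * m) * K) (n : ℕ) :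
    ∀ᵐ x, |DDelta d A B k n x| ≤ n * exp (ϑ'' * n) * (B.avg * exp ϑ'' * K) := by
  filter_upwards [ae_abs_DDelta_le A B (by positivity) (hk (n + 1))] with x hx
  refine hx.trans_eq ?_
  rw [exp_mul_natCast_succ]
  ring

end WeightedBounds

theorem CDeltaOmega_DDelta_norm_bounds_general (d : ℕ)
    (A : JumpKernel d) (B : RateKernel d) (ω : ℝ) (hω : 0 ≤ ω)
    (ϑ'' ϑ : ℝ) (hϑ : ϑ'' < ϑ) (k : CorrFun d) (hk : famNorm d k.k ϑ'' < ⊤) :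
    famNorm d (CDeltaOmega d A B ω k.k) ϑ ≤
      ENNReal.ofReal ((ω + B.avg * Real.exp ϑ) / (Real.exp 1 * (ϑ - ϑ''))) *
        famNorm d k.k ϑ'' ∧
    famNorm d (DDelta d A B k.k) ϑ ≤
      ENNReal.ofReal (B.avg * Real.exp ϑ / (Real.exp 1 * (ϑ - ϑ''))) *
        famNorm d k.k ϑ'' := by
  set K := (famNorm d k.k ϑ'').toReal
  have hK : 0 ≤ K := ENNReal.toReal_nonneg
  have hkK := ae_abs_le_exp_mul_famNorm hk.ne
  have hδ : 0 < exp 1 * (ϑ - ϑ'') := mul_pos (exp_pos 1) (sub_pos.2 hϑ)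
  have havg := B.avg_nonneg
  rw [← ENNReal.ofReal_toReal hk.ne, ← ENNReal.ofReal_mul (by positivity),
    ← ENNReal.ofReal_mul (by positivity)]
  constructor
  · refine (famNorm_le_of_ae_abs_le_nat_mul_exp hϑ (by positivity)
      (ae_abs_CDeltaOmega_le A B hω hK hkK)).trans (ENNReal.ofReal_le_ofReal ?_)
    rw [div_mul_eq_mul_div]
    gcongr
  · refine (famNorm_le_of_ae_abs_le_nat_mul_exp hϑ (by positivity)
      (ae_abs_DDelta_le_nat_mul_exp A B hK hkK)).trans (ENNReal.ofReal_le_ofReal ?_)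
    rw [div_mul_eq_mul_div]
    gcongr

/-- Estimates (4.12): for `ϑ'' < ϑ` and `k ∈ K_{ϑ''}`,
`‖C^{Δ,ω} k‖_ϑ ≤ ((ω + ⟨b⟩e^ϑ)/(e(ϑ-ϑ''))) ‖k‖_{ϑ''}` and
`‖D^Δ k‖_ϑ ≤ (⟨b⟩e^ϑ/(e(ϑ-ϑ''))) ‖k‖_{ϑ''}`, so that `C^{Δ,ω}` and `D^Δ`
define bounded operators from `K_{ϑ''}` to `K_ϑ` with these norm bounds. -/
theorem CDeltaOmega_DDelta_norm_bounds (d : ℕ) (hd : 1 ≤ d)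
    (A : JumpKernel d) (B : RateKernel d) (ω : ℝ) (hω : 0 ≤ ω)
    (ϑ'' ϑ : ℝ) (hϑ : ϑ'' < ϑ) (k : CorrFun d) (hk : famNorm d k.k ϑ'' < ⊤) :
    famNorm d (CDeltaOmega d A B ω k.k) ϑ ≤
      ENNReal.ofReal ((ω + B.avg * Real.exp ϑ) / (Real.exp 1 * (ϑ - ϑ''))) *
        famNorm d k.k ϑ'' ∧
    famNorm d (DDelta d A B k.k) ϑ ≤
      ENNReal.ofReal (B.avg * Real.exp ϑ / (Real.exp 1 * (ϑ - ϑ''))) *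
        famNorm d k.k ϑ'' :=
  CDeltaOmega_DDelta_norm_bounds_general d A B ω hω ϑ'' ϑ hϑ k hk

end Kawasaki
end

section
/- Let d ≥ 1, let a be a jump kernel and b a rate-perturbation kernel, let ω ≥ 0, and assume the stability condition: Φ₊(x₁,…,xₙ) ≤ Φ₋(x₁,…,xₙ) + ω n for all n ≥ 1 and all (x₁,…,xₙ) ∈ (ℝ^d)ⁿ. Let ϑ ∈ ℝ and let G = (G⁽ⁿ⁾)ₙ be a nonnegative correlation-type family with Σ_{n≥1} (1/n!) ∫_{(ℝ^d)ⁿ} Ψ_ω(x₁,…,xₙ) G⁽ⁿ⁾(x₁,…,xₙ) e^{ϑ n} dx₁…dxₙ < ∞. Then |Â G|_ϑ := Σ_{n≥1} (1/n!) ∫_{(ℝ^d)ⁿ} |(Â G)⁽ⁿ⁾(x₁,…,xₙ)| e^{ϑ n} dx₁…dxₙ ≤ Σ_{n≥1} (1/n!) ∫_{(ℝ^d)ⁿ} Ψ_ω(x₁,…,xₙ) G⁽ⁿ⁾(x₁,…,xₙ) e^{ϑ n} dx₁…dxₙ. (The dissipativity estimate (4.4) of the paper, which is the key ingredient of Lemma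 4.1.) -/
open MeasureTheory ENNReal Real Filter Finset

namespace Kawasaki

/-- The operator `Â` acting componentwise:
`(Â G)⁽ⁿ⁾(x₁,…,xₙ) = Σᵢ ∫ a(xᵢ,y)(1 + Σ_{j≠i} b(xᵢ,y|xⱼ)) G⁽ⁿ⁾(x₁,…,y,…,xₙ) dy`. -/
noncomputable def Ahat (d : ℕ) (A : JumpKernel d) (B : RateKernel d) (G : Fam d) : Fam d :=
  fun n x => ∑ i : Fin n, ∫ y,
    A.a (x i) y * (1 + ∑ j ∈ Finset.univ.erase i, B.b (x i) y (x j)) *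
      G n (Function.update x i y)

/-! The proof works for each particle number `n` separately. Since `G ≥ 0`, also `Â G ≥ 0`,
so `∫ |Â G|` is at most the sum over `i` of the double integrals over `(x, y)` of the rate of the jump
`xᵢ → y` times `G` at the configuration after the jump. Exchanging `xᵢ` with `y` is a
measure-preserving involution of `(ℝᵈ)ⁿ × ℝᵈ`; afterwards `G` is evaluated at the integration
point `x`, and the rate of the reverse jump `y → xᵢ` integrates in `y`, by the symmetry of `a`,
to `∫ a(xᵢ, y) dy + Σ_{j≠i} φ₊(xᵢ, xⱼ)`. Summed over `i` this is `Ψ` with `Φ₊` in place of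
`Φ₋`, which the stability condition bounds by `Ψ_ω`. -/

theorem _root_.MeasureTheory.measurePreserving_update_swap {ι α : Type*} [Fintype ι]
    [DecidableEq ι] [MeasurableSpace α] (μ : Measure α) [SigmaFinite μ] (i : ι) :
    MeasurePreserving (fun p : (ι → α) × α => (Function.update p.1 i p.2, p.1 i))
      ((Measure.pi fun _ => μ).prod μ) ((Measure.pi fun _ => μ).prod μ) := by
  -- On `Option ι → α ≃ (ι → α) × α` the map is the transposition of the coordinates
  -- `none` and `some i`.
  let e := MeasurableEquiv.piOptionEquivProd (fun _ : Option ι => α)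
  have he : MeasurePreserving e.symm ((Measure.pi fun _ => μ).prod μ)
      (Measure.pi fun _ : Option ι => μ) :=
    ⟨e.symm.measurable, Measure.pi_map_piOptionEquivProd fun _ => μ⟩
  have hσ := measurePreserving_arrowCongr' (fun _ : Option ι => μ) (fun _ => μ)
    (Equiv.swap none (some i)) (MeasurableEquiv.refl α) fun _ => MeasurePreserving.id μ
  have he_apply : ∀ f, e f = (fun j => f (some j), f none) := fun _ => rfl
  have he_symm : ∀ p : (ι → α) × α, e.symm p = fun o => Option.elim o p.2 p.1 := by
    intro p
    rw [MeasurableEquiv.symm_apply_eq, he_apply]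
    rfl
  have hσ_apply : ∀ f : Option ι → α, MeasurableEquiv.arrowCongr' (Equiv.swap none (some i))
      (MeasurableEquiv.refl α) f = f ∘ Equiv.swap none (some i) := fun _ => rfl
  convert he.symm.comp (hσ.comp he) using 1
  ext ⟨x, y⟩ j
  · simp only [Function.comp_apply, MeasurableEquiv.symm_symm, he_symm, hσ_apply, he_apply,
      Function.update_apply]
    split_ifs with h
    · simp [h]
    · rw [Equiv.swap_apply_of_ne_of_ne (Option.some_ne_none j) (by simpa using h)]
      rfl
  · simp [he_symm, hσ_apply, he_apply]

theorem _root_.MeasureTheory.lintegral_lintegral_update_swap {ι α : Type*} [Fintype ι]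
    [DecidableEq ι] [MeasurableSpace α] (μ : Measure α) [SigmaFinite μ]
    {F : (ι → α) × α → ℝ≥0∞} (hF : Measurable F) (i : ι) :
    ∫⁻ x, ∫⁻ y, F (x, y) ∂μ ∂(Measure.pi fun _ => μ) =
      ∫⁻ x, ∫⁻ y, F (Function.update x i y, x i) ∂μ ∂(Measure.pi fun _ => μ) := by
  have hswap := measurePreserving_update_swap μ i
  rw [← lintegral_prod _ hF.aemeasurable, ← hswap.lintegral_comp hF]
  exact lintegral_prod _ (hF.comp hswap.measurable).aemeasurable

theorem _root_.MeasureTheory.ofReal_integral_le_lintegral_ofReal {α : Type*} [MeasurableSpace α]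
    {μ : Measure α} {f : α → ℝ} (hf : 0 ≤ᵐ[μ] f) :
    ENNReal.ofReal (∫ x, f x ∂μ) ≤ ∫⁻ x, ENNReal.ofReal (f x) ∂μ := by
  by_cases hint : Integrable f μ
  · exact (ofReal_integral_eq_lintegral_ofReal hint hf).le
  · simp [integral_undef hint]

theorem RateKernel.le_bbar {d : ℕ} (B : RateKernel d) (x y z : Rd d) : B.b x y z ≤ B.bbar :=
  le_ciSup B.bddAbove (x, y, z)

@[fun_prop]
theorem JumpKernel.measurable_comp {d : ℕ} (A : JumpKernel d) {β : Type*} [MeasurableSpace β]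
    {f g : β → Rd d} (hf : Measurable f) (hg : Measurable g) :
    Measurable fun t => A.a (f t) (g t) :=
  A.measurable.comp (hf.prodMk hg)

@[fun_prop]
theorem RateKernel.measurable_comp {d : ℕ} (B : RateKernel d) {β : Type*} [MeasurableSpace β]
    {f g h : β → Rd d} (hf : Measurable f) (hg : Measurable g) (hh : Measurable h) :
    Measurable fun t => B.b (f t) (g t) (h t) :=
  B.measurable.comp (hf.prodMk (hg.prodMk hh))

theorem JumpKernel.integrable_mul_rate {d : ℕ} (A : JumpKernel d) (B : RateKernel d)
    (x z : Rd d) : Integrable fun y => A.a y x * B.b y x z := by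
  have hmeas : Measurable fun y => A.a y x * B.b y x z := by fun_prop
  refine ((A.integrable x).mul_const B.bbar).mono' hmeas.aestronglyMeasurable
    (Eventually.of_forall fun y => ?_)
  rw [Real.norm_eq_abs, abs_of_nonneg (mul_nonneg (A.nonneg _ _) (B.nonneg _ _ _))]
  exact mul_le_mul_of_nonneg_left (B.le_bbar _ _ _) (A.nonneg _ _)

/-- The rate at which `Â` moves particle `i` from `xᵢ` to `y`. -/
noncomputable def jumpRate (d : ℕ) (A : JumpKernel d) (B : RateKernel d) {n : ℕ}
    (x : Fin n → Rd d) (i : Fin n) (y : Rd d) : ℝ :=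
  A.a (x i) y * (1 + ∑ j ∈ Finset.univ.erase i, B.b (x i) y (x j))

noncomputable def PsiPlus (d : ℕ) (A : JumpKernel d) (B : RateKernel d) (n : ℕ)
    (x : Fin n → Rd d) : ℝ :=
  (∑ i : Fin n, ∫ y, A.a (x i) y) + PhiPlus d A B n x

section JumpRate

variable {d : ℕ} (A : JumpKernel d) (B : RateKernel d) {n : ℕ}

theorem jumpRate_nonneg (x : Fin n → Rd d) (i : Fin n) (y : Rd d) :
    0 ≤ jumpRate d A B x i y :=
  mul_nonneg (A.nonneg _ _) (add_nonneg zero_le_one (sum_nonneg fun _ _ => B.nonneg _ _ _))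

theorem PsiPlus_nonneg (x : Fin n → Rd d) : 0 ≤ PsiPlus d A B n x :=
  add_nonneg (sum_nonneg fun _ _ => integral_nonneg fun _ => A.nonneg _ _)
    (sum_nonneg fun _ _ => sum_nonneg fun _ _ =>
      integral_nonneg fun _ => mul_nonneg (A.nonneg _ _) (B.nonneg _ _ _))

theorem measurable_jumpRate (i : Fin n) :
    Measurable fun p : (Fin n → Rd d) × Rd d => jumpRate d A B p.1 i p.2 := by
  unfold jumpRate
  fun_prop

theorem Ahat_eq_sum_integral_jumpRate (G : Fam d) (x : Fin n → Rd d) :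
    Ahat d A B G n x = ∑ i, ∫ y, jumpRate d A B x i y * G n (Function.update x i y) :=
  rfl

theorem Ahat_nonneg {G : Fam d} (hG0 : ∀ x, 0 ≤ G n x) (x : Fin n → Rd d) :
    0 ≤ Ahat d A B G n x :=
  sum_nonneg fun _ _ => integral_nonneg fun _ => mul_nonneg (jumpRate_nonneg A B _ _ _) (hG0 _)

theorem jumpRate_update_self (x : Fin n → Rd d) (i : Fin n) (y : Rd d) :
    jumpRate d A B (Function.update x i y) i (x i) =
      A.a y (x i) + ∑ j ∈ Finset.univ.erase i, A.a y (x i) * B.b y (x i) (x j) := by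
  rw [jumpRate, mul_add, mul_one, mul_sum, Function.update_self]
  congr 1
  refine sum_congr rfl fun j hj => ?_
  rw [Function.update_of_ne (ne_of_mem_erase hj)]

theorem integrable_jumpRate_update_self (x : Fin n → Rd d) (i : Fin n) :
    Integrable fun y => jumpRate d A B (Function.update x i y) i (x i) := by
  simp_rw [jumpRate_update_self]
  exact (A.integrable _).add (integrable_finsetSum _ fun j _ => A.integrable_mul_rate B _ _)

theorem integral_jumpRate_update_self (x : Fin n → Rd d) (i : Fin n) :
    ∫ y, jumpRate d A B (Function.update x i y) i (x i) =
      (∫ y, A.a (x i) y) + ∑ j ∈ Finset.univ.erase i, phiPlus d A B (x i) (x j) := by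
  simp_rw [jumpRate_update_self]
  have hrate : ∀ j ∈ Finset.univ.erase i, Integrable fun y => A.a y (x i) * B.b y (x i) (x j) :=
    fun j _ => A.integrable_mul_rate B _ _
  rw [integral_add (A.integrable _) (integrable_finsetSum _ hrate), integral_finsetSum _ hrate]
  congr 1
  exact integral_congr_ae (Eventually.of_forall fun y => A.symm y (x i))

theorem sum_lintegral_ofReal_jumpRate_update_self (x : Fin n → Rd d) :
    ∑ i, ∫⁻ y, ENNReal.ofReal (jumpRate d A B (Function.update x i y) i (x i)) =
      ENNReal.ofReal (PsiPlus d A B n x) := by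
  have hjump0 : ∀ i, 0 ≤ᵐ[volume] fun y => jumpRate d A B (Function.update x i y) i (x i) :=
    fun i => Eventually.of_forall fun y => jumpRate_nonneg A B _ _ _
  simp_rw [← ofReal_integral_eq_lintegral_ofReal (integrable_jumpRate_update_self A B x _)
    (hjump0 _)]
  rw [← ENNReal.ofReal_sum_of_nonneg fun i _ => integral_nonneg_of_ae (hjump0 i)]
  simp_rw [integral_jumpRate_update_self, sum_add_distrib]
  rfl

theorem ofReal_Ahat_le_sum_lintegral {G : Fam d} (hG0 : ∀ x, 0 ≤ G n x) (x : Fin n → Rd d) :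
    ENNReal.ofReal (Ahat d A B G n x) ≤
      ∑ i, ∫⁻ y, ENNReal.ofReal (jumpRate d A B x i y * G n (Function.update x i y)) := by
  have hterm0 : ∀ i y, 0 ≤ jumpRate d A B x i y * G n (Function.update x i y) :=
    fun _ _ => mul_nonneg (jumpRate_nonneg A B _ _ _) (hG0 _)
  rw [Ahat_eq_sum_integral_jumpRate,
    ENNReal.ofReal_sum_of_nonneg fun i _ => integral_nonneg (hterm0 i)]
  exact sum_le_sum fun i _ => ofReal_integral_le_lintegral_ofReal (Eventually.of_forall (hterm0 i))

theorem lintegral_ofReal_Ahat_le {G : Fam d} (hG : Measurable (G n)) (hG0 : ∀ x, 0 ≤ G n x) :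
    ∫⁻ x, ENNReal.ofReal (Ahat d A B G n x) ≤
      ∫⁻ x, ENNReal.ofReal (PsiPlus d A B n x * G n x) := by
  set f : Fin n → (Fin n → Rd d) × Rd d → ℝ≥0∞ := fun i p =>
    ENNReal.ofReal (jumpRate d A B p.1 i p.2 * G n (Function.update p.1 i p.2)) with hf_def
  have hf : ∀ i, Measurable (f i) := fun i =>
    ((measurable_jumpRate A B i).mul (hG.comp measurable_update')).ennreal_ofReal
  have hf_swap : ∀ i x y, f i (Function.update x i y, x i) =
      ENNReal.ofReal (jumpRate d A B (Function.update x i y) i (x i)) * ENNReal.ofReal (G n x) := by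
    intro i x y
    simp only [hf_def, Function.update_idem, Function.update_eq_self]
    exact ENNReal.ofReal_mul (jumpRate_nonneg A B _ _ _)
  have hswapped : ∀ x, ∑ i, ∫⁻ y, f i (Function.update x i y, x i) =
      ENNReal.ofReal (PsiPlus d A B n x * G n x) := by
    intro x
    have hfactor : ∀ i, ∫⁻ y, f i (Function.update x i y, x i) =
        (∫⁻ y, ENNReal.ofReal (jumpRate d A B (Function.update x i y) i (x i))) *
          ENNReal.ofReal (G n x) := by
      intro i
      simp_rw [hf_swap]
      exact lintegral_mul_const' _ _ ENNReal.ofReal_ne_top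
    rw [sum_congr rfl fun i _ => hfactor i, ← sum_mul,
      sum_lintegral_ofReal_jumpRate_update_self, ENNReal.ofReal_mul (PsiPlus_nonneg A B x)]
  calc ∫⁻ x, ENNReal.ofReal (Ahat d A B G n x)
      ≤ ∫⁻ x, ∑ i, ∫⁻ y, f i (x, y) := lintegral_mono (ofReal_Ahat_le_sum_lintegral A B hG0)
    _ = ∑ i, ∫⁻ x, ∫⁻ y, f i (x, y) :=
        lintegral_finsetSum _ fun i _ => (hf i).lintegral_prod_right'
    _ = ∑ i, ∫⁻ x, ∫⁻ y, f i (Function.update x i y, x i) :=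
        sum_congr rfl fun i _ => lintegral_lintegral_update_swap volume (hf i) i
    _ = ∫⁻ x, ∑ i, ∫⁻ y, f i (Function.update x i y, x i) :=
        (lintegral_finsetSum _ fun i _ => ((hf i).comp
          ((measurePreserving_update_swap volume i).measurable)).lintegral_prod_right').symm
    _ = ∫⁻ x, ENNReal.ofReal (PsiPlus d A B n x * G n x) := lintegral_congr hswapped

end JumpRate

theorem Ahat_dissipative_general (d : ℕ) (A : JumpKernel d) (B : RateKernel d) (ω : ℝ)
    (hstab : ∀ n : ℕ, 1 ≤ n → ∀ x : Fin n → Rd d,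
      PhiPlus d A B n x ≤ PhiMinus d A B n x + ω * n)
    (ϑ : ℝ) (G : CorrFun d) (hGpos : ∀ n x, 0 ≤ G.k n x) :
    (∑' n : ℕ, ((n + 1).factorial : ℝ≥0∞)⁻¹ *
        ∫⁻ x : Fin (n + 1) → Rd d,
          ENNReal.ofReal (|Ahat d A B G.k (n + 1) x| * Real.exp (ϑ * (n + 1)))) ≤
      ∑' n : ℕ, ((n + 1).factorial : ℝ≥0∞)⁻¹ *
        ∫⁻ x : Fin (n + 1) → Rd d,
          ENNReal.ofReal ((Psi d A B (n + 1) x + ω * (n + 1)) * G.k (n + 1) x *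
            Real.exp (ϑ * (n + 1))) := by
  refine ENNReal.tsum_le_tsum fun n => mul_le_mul_right ?_ _
  set E := Real.exp (ϑ * (n + 1))
  have hAhat0 := Ahat_nonneg A B (hGpos (n + 1))
  have hPsiPlus_le : ∀ x, PsiPlus d A B (n + 1) x ≤ Psi d A B (n + 1) x + ω * (n + 1) := by
    intro x
    have := hstab (n + 1) (Nat.le_add_left 1 n) x
    push_cast at this
    rw [PsiPlus, Psi]
    linarith
  calc ∫⁻ x, ENNReal.ofReal (|Ahat d A B G.k (n + 1) x| * E)
      = (∫⁻ x, ENNReal.ofReal (Ahat d A B G.k (n + 1) x)) * ENNReal.ofReal E := by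
        simp_rw [abs_of_nonneg (hAhat0 _), ENNReal.ofReal_mul (hAhat0 _)]
        exact lintegral_mul_const' _ _ ENNReal.ofReal_ne_top
    _ ≤ (∫⁻ x, ENNReal.ofReal (PsiPlus d A B (n + 1) x * G.k (n + 1) x)) * ENNReal.ofReal E := by
        gcongr ?_ * _
        exact lintegral_ofReal_Ahat_le A B (G.measurable _) (hGpos _)
    _ = ∫⁻ x, ENNReal.ofReal (PsiPlus d A B (n + 1) x * G.k (n + 1) x * E) := by
        simp_rw [ENNReal.ofReal_mul (mul_nonneg (PsiPlus_nonneg A B _) (hGpos _ _))]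
        exact (lintegral_mul_const' _ _ ENNReal.ofReal_ne_top).symm
    _ ≤ _ := lintegral_mono fun x => ENNReal.ofReal_le_ofReal <| by
        gcongr
        · exact hGpos _ _
        · exact hPsiPlus_le x

/-- The dissipativity estimate (4.4): under the stability condition
`Φ₊ ≤ Φ₋ + ωn`, for every nonnegative correlation-type family `G` with
`Σ_{n≥1} (1/n!) ∫ Ψ_ω G⁽ⁿ⁾ e^{ϑn} < ∞` one has
`|Â G|_ϑ = Σ_{n≥1} (1/n!) ∫ |(Â G)⁽ⁿ⁾| e^{ϑn} ≤ Σ_{n≥1} (1/n!) ∫ Ψ_ω G⁽ⁿ⁾ e^{ϑn}`. -/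
theorem Ahat_dissipative (d : ℕ) (hd : 1 ≤ d) (A : JumpKernel d) (B : RateKernel d)
    (ω : ℝ) (hω : 0 ≤ ω)
    (hstab : ∀ n : ℕ, 1 ≤ n → ∀ x : Fin n → Rd d,
      PhiPlus d A B n x ≤ PhiMinus d A B n x + ω * n)
    (ϑ : ℝ) (G : CorrFun d) (hGpos : ∀ n x, 0 ≤ G.k n x)
    (hGfin : (∑' n : ℕ, ((n + 1).factorial : ℝ≥0∞)⁻¹ *
        ∫⁻ x : Fin (n + 1) → Rd d,
          ENNReal.ofReal ((Psi d A B (n + 1) x + ω * (n + 1)) * G.k (n + 1) x *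
            Real.exp (ϑ * (n + 1)))) < ⊤) :
    (∑' n : ℕ, ((n + 1).factorial : ℝ≥0∞)⁻¹ *
        ∫⁻ x : Fin (n + 1) → Rd d,
          ENNReal.ofReal (|Ahat d A B G.k (n + 1) x| * Real.exp (ϑ * (n + 1)))) ≤
      ∑' n : ℕ, ((n + 1).factorial : ℝ≥0∞)⁻¹ *
        ∫⁻ x : Fin (n + 1) → Rd d,
          ENNReal.ofReal ((Psi d A B (n + 1) x + ω * (n + 1)) * G.k (n + 1) x *
            Real.exp (ϑ * (n + 1))) :=
  Ahat_dissipative_general d A B ω hstab ϑ G hGpos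

end Kawasaki
end
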